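/- Symmetric normalization of spliced arrows gives monoidal lenses, on hom-sets (Theorem: lenses are the free symmetric normalization, morphism case). Let (C, ⊗, I, σ) be a symmetric monoidal category and A, B, X, Y objects of C. Let Q be the quotient of the type of tuples (U V : C, f : A ⟶ U ⊗ X, g : V ⊗ Y ⟶ B, h : U ⟶ V) by the equivalence relation generated by: for all u : U ⟶ U₁, v : V₁ ⟶ V, h₁ : U₁ ⟶ V₁, the tuple (U₁, V₁, f ≫ (u ⊗ id_X), (v ⊗ id_Y) ≫ g, h₁) is identified with (U, V, f, g, u ≫ h₁ ≫ v). Then the map sending the class of (U, V, f, g, h) to the class of (U, f, (h ⊗ id_Y) ≫ g) is a well-defined bijection from Q to LC((A,B);(X,Y)). -/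

import Mathlib

/-!
Symmetric normalization of spliced arrows gives monoidal lenses, on hom-sets.
-/

open CategoryTheory MonoidalCategory

universe v u

variable {C : Type u} [Category.{v} C] [MonoidalCategory C] [SymmetricCategory C]

/-- A representative of a monoidal lens from `(A,B)` to `(X,Y)`. -/
structure LensRep (A B X Y : C) where
  M : C
  f : A ⟶ M ⊗ X
  g : M ⊗ Y ⟶ B

/-- Dinaturality in the residual. -/
inductive LensRel (A B X Y : C) : LensRep A B X Y → LensRep A B X Y → Prop
  | dinat {M M' : C} (m : M ⟶ M') (f : A ⟶ M ⊗ X) (g' : M' ⊗ Y ⟶ B) :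
      LensRel A B X Y ⟨M', f ≫ (m ⊗ₘ 𝟙 X), g'⟩ ⟨M, f, (m ⊗ₘ 𝟙 Y) ≫ g'⟩

/-- Monoidal lenses. -/
abbrev LC (A B X Y : C) : Type max u v := Quot (LensRel A B X Y)

/-- A representative of a symmetric normalization of spliced monoidal arrows:
a parallel split with hole `(U ⊗ X, V ⊗ Y)` whose unit hole is filled by
`h : U ⟶ V`. -/
structure NRep (A B X Y : C) where
  U : C
  V : C
  f : A ⟶ U ⊗ X
  g : V ⊗ Y ⟶ B
  h : U ⟶ V

/-- Dinaturality in `(U,V)`. -/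
inductive NRel (A B X Y : C) : NRep A B X Y → NRep A B X Y → Prop
  | dinat {U U₁ V V₁ : C} (u : U ⟶ U₁) (v : V₁ ⟶ V)
      (f : A ⟶ U ⊗ X) (g : V ⊗ Y ⟶ B) (h₁ : U₁ ⟶ V₁) :
      NRel A B X Y
        ⟨U₁, V₁, f ≫ (u ⊗ₘ 𝟙 X), (v ⊗ₘ 𝟙 Y) ≫ g, h₁⟩
        ⟨U, V, f, g, u ≫ h₁ ≫ v⟩

/-- The hom-sets of the symmetric normalization of the produoidal category of
spliced monoidal arrows over a symmetric monoidal category are in bijection with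
monoidal lenses, by filling the unit hole. -/
theorem symmetric_normalization_of_splice_is_lenses (C : Type u) [Category.{v} C]
    [MonoidalCategory C] [SymmetricCategory C] (A B X Y : C) :
    ∃ e : Quot (NRel A B X Y) → LC A B X Y,
      (∀ r : NRep A B X Y,
          e (Quot.mk _ r) = Quot.mk _ ⟨r.U, r.f, (r.h ⊗ₘ 𝟙 Y) ≫ r.g⟩) ∧
      Function.Bijective e := by
  classical
  refine ⟨Quot.lift (fun r => Quot.mk _ ⟨r.U, r.f, (r.h ⊗ₘ 𝟙 Y) ≫ r.g⟩) ?_, fun r => rfl, ?_⟩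
  · rintro _ _ ⟨u, v, f, g, h₁⟩
    dsimp only
    have := Quot.sound (LensRel.dinat (A := A) (B := B) (X := X) (Y := Y)
      u f ((h₁ ⊗ₘ 𝟙 Y) ≫ (v ⊗ₘ 𝟙 Y) ≫ g))
    simpa [comp_tensor_id, Category.assoc] using this
  · constructor
    · -- injective: construct inverse
      let inv : LC A B X Y → Quot (NRel A B X Y) := Quot.lift
        (fun r => Quot.mk _ ⟨r.M, r.M, r.f, r.g, 𝟙 r.M⟩) (by
          rintro _ _ ⟨m, f, g'⟩
          dsimp only
          have h1 : (Quot.mk (NRel A B X Y) ⟨_, _, f ≫ (m ⊗ₘ 𝟙 X), g', 𝟙 _⟩)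
              = Quot.mk _ ⟨_, _, f, g', m ≫ 𝟙 _ ≫ 𝟙 _⟩ := by
            have := Quot.sound (NRel.dinat (A := A) (B := B) (X := X) (Y := Y)
              m (𝟙 _) f g' (𝟙 _))
            simpa using this
          have h2 : (Quot.mk (NRel A B X Y) ⟨_, _, f, (m ⊗ₘ 𝟙 Y) ≫ g', 𝟙 _⟩)
              = Quot.mk _ ⟨_, _, f, g', 𝟙 _ ≫ 𝟙 _ ≫ m⟩ := by
            have := Quot.sound (NRel.dinat (A := A) (B := B) (X := X) (Y := Y)
              (𝟙 _) m f g' (𝟙 _))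
            simpa using this
          rw [h1, h2]; simp)
      intro a b hab
      have key : ∀ (pf) (q : Quot (NRel A B X Y)),
          inv (Quot.lift (fun r => Quot.mk (LensRel A B X Y)
            ⟨r.U, r.f, (r.h ⊗ₘ 𝟙 Y) ≫ r.g⟩) pf q) = q := by
        intro pf q
        induction q using Quot.ind with | _ r => ?_
        obtain ⟨U, V, f, g, h⟩ := r
        show Quot.mk (NRel A B X Y) ⟨U, U, f, (h ⊗ₘ 𝟙 Y) ≫ g, 𝟙 U⟩ = Quot.mk (NRel A B X Y) ⟨U, V, f, g, h⟩
        have := Quot.sound (NRel.dinat (A := A) (B := B) (X := X) (Y := Y)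
          (𝟙 U) h f g (𝟙 U))
        simpa using this
      exact (key _ a).symm.trans ((congrArg inv hab).trans (key _ b))
    · intro q
      induction q using Quot.ind with | _ r => ?_
      refine ⟨Quot.mk _ ⟨r.M, r.M, r.f, r.g, 𝟙 r.M⟩, ?_⟩
      simp
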